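/- arXiv:0908.0699 — 2 statements merged into one kernel-verified Lean document; each statement's English description precedes it below -/
import Mathlib

section
/- Let n ≥ 2 and let Σ = {±e_k ± e_l : 1 ≤ k < l ≤ n} ∪ {±2e_k : 1 ≤ k ≤ n} ⊂ ℝ^n be the root system of type C_n with simple roots α_k = e_k − e_{k+1} (1 ≤ k ≤ n−1) and α_n = 2e_n. Let 1 ≤ i < n, let S = {α_k : 1 ≤ k ≤ n−1, k ≠ i}, and let p be the orthogonal projection of ℝ^n onto the orthogonal complement of the span of S. Write ᾱ_i = p(α_i) and ᾱ_n = p(α_n). Then ᾱ_i and ᾱ_n are linearly independent and the set of reduced restricted roots Σ_red(S) equals {±ᾱ_i, ±ᾱ_n, ±(ᾱ_i + ᾱ_n), ±(2ᾱ_i + ᾱ_n)}. -/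
noncomputable section

/-- The `k`-th standard basis vector of `ℝ^N`. -/
def e {N : ℕ} (k : Fin N) : EuclideanSpace ℝ (Fin N) := EuclideanSpace.single k 1

/-- Orthogonal projection of `ℝ^N` onto the orthogonal complement of the span of `S`. -/
def projC {N : ℕ} (S : Set (EuclideanSpace ℝ (Fin N))) (v : EuclideanSpace ℝ (Fin N)) :
    EuclideanSpace ℝ (Fin N) :=
  (Submodule.orthogonalProjection ((Submodule.span ℝ S)ᗮ) v : EuclideanSpace ℝ (Fin N))

/-- The set of restricted roots `Σ(S) = p(Σ) \ {0}`. -/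
def restrictedRoots {N : ℕ} (Rts S : Set (EuclideanSpace ℝ (Fin N))) :
    Set (EuclideanSpace ℝ (Fin N)) :=
  (projC S '' Rts) \ {0}

/-- The set of reduced restricted roots: those `x ∈ Σ(S)` with `x/2 ∉ Σ(S)`. -/
def reducedRestrictedRoots {N : ℕ} (Rts S : Set (EuclideanSpace ℝ (Fin N))) :
    Set (EuclideanSpace ℝ (Fin N)) :=
  {x ∈ restrictedRoots Rts S | ¬ (1 / 2 : ℝ) • x ∈ restrictedRoots Rts S}

/-- The root system of type `C_n` in `ℝ^n`: `±e_k ± e_l` (`k < l`) and `±2e_k`. -/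
def Croots (n : ℕ) : Set (EuclideanSpace ℝ (Fin n)) :=
  {v | ∃ k l : Fin n, k < l ∧
    (v = e k - e l ∨ v = e k + e l ∨ v = -e k + e l ∨ v = -e k - e l)} ∪
  {v | ∃ k : Fin n, v = (2 : ℝ) • e k ∨ v = -((2 : ℝ) • e k)}

/-- The simple roots of `C_n`: `α_k = e_k − e_{k+1}` (`1 ≤ k ≤ n−1`) and `α_n = 2e_n`
(indexed here by `Fin n`). -/
def Csimple (n : ℕ) (k : Fin n) : EuclideanSpace ℝ (Fin n) :=
  if h : (k : ℕ) + 1 < n then e k - e ⟨(k : ℕ) + 1, h⟩ else (2 : ℝ) • e k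

/-!
The orthogonal complement of the span of `S` consists of the vectors that are constant on the
two blocks `{k ≤ i}` and `{k > i}`. Hence `p(e_k)` is the average `u` of the basis vectors of the
first block or the average `w` of those of the second, so `ᾱ_i = u - w` and `ᾱ_n = 2w` are
linearly independent, and in the basis `ᾱ_i, ᾱ_n` we have `u = (1, 1/2)`, `w = (0, 1/2)`. Every
root of `C_n` is `±e_k ± e_l` (with `k = l` allowed for `±2e_k`), so it projects to `0` or to a
root of `B_2 = {±(1,0), ±(0,1), ±(1,1), ±(2,1)}`, and all of these already occur for
`k, l ∈ {i, i + 1}`. No root of `B_2` is twice another, so `Σ_red(S) = Σ(S)`.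
-/

open Finset Submodule

lemma e_apply {N : ℕ} (k j : Fin N) : e k j = if j = k then 1 else 0 :=
  PiLp.single_apply 2 ℝ k 1 j

lemma inner_e_left {N : ℕ} (k : Fin N) (z : EuclideanSpace ℝ (Fin N)) :
    inner ℝ (e k) z = z k := by
  simp [e, EuclideanSpace.inner_single_left]

lemma projC_eq_starProjection {N : ℕ} (S : Set (EuclideanSpace ℝ (Fin N))) :
    projC S = ⇑(span ℝ S)ᗮ.starProjection :=
  rfl

lemma Submodule.mem_orthogonal_span_iff {𝕜 E : Type*} [RCLike 𝕜] [NormedAddCommGroup E]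
    [InnerProductSpace 𝕜 E] (s : Set E) (v : E) :
    v ∈ (span 𝕜 s)ᗮ ↔ ∀ u ∈ s, inner 𝕜 u v = 0 := by
  rw [← span_singleton_le_iff_mem, ← isOrtho_iff_le, isOrtho_comm, isOrtho_span]
  simp

lemma Fin.apply_eq_of_forall_succ {α : Type*} {n : ℕ} (f : Fin n → α) {j k : Fin n}
    (hjk : j ≤ k)
    (h : ∀ m : Fin n, j ≤ m → ∀ hm : (m : ℕ) + 1 < n, (m : ℕ) + 1 ≤ k → f m = f ⟨m + 1, hm⟩) :
    f j = f k := by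
  suffices key : ∀ d (hd : (j : ℕ) + d < n), (j : ℕ) + d ≤ k → f j = f ⟨j + d, hd⟩ by
    rw [key (k - j) (by omega) (by omega)]
    congr 1
    ext
    simp only [Fin.le_def] at hjk ⊢
    omega
  intro d
  induction d with
  | zero => intro _ _; rfl
  | succ d ih =>
    intro hd hdk
    rw [ih (by omega) (by omega)]
    exact h ⟨j + d, by omega⟩ (by simp [Fin.le_def]) hd (by simp only; omega)

def basisAverage {N : ℕ} (s : Finset (Fin N)) : EuclideanSpace ℝ (Fin N) :=
  (#s : ℝ)⁻¹ • ∑ j ∈ s, e j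

lemma basisAverage_apply {N : ℕ} (s : Finset (Fin N)) (j : Fin N) :
    basisAverage s j = if j ∈ s then (#s : ℝ)⁻¹ else 0 := by
  simp [basisAverage, e_apply]

lemma starProjection_e_eq_basisAverage {N : ℕ} (K : Submodule ℝ (EuclideanSpace ℝ (Fin N)))
    [K.HasOrthogonalProjection] {s : Finset (Fin N)} {k : Fin N} (hk : k ∈ s)
    (hconst : ∀ z ∈ K, ∀ j ∈ s, z j = z k) (havg : basisAverage s ∈ K) :
    K.starProjection (e k) = basisAverage s := by
  refine eq_starProjection_of_mem_of_inner_eq_zero havg fun z hz => ?_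
  have hs : (#s : ℝ) ≠ 0 := by exact_mod_cast (card_pos.2 ⟨k, hk⟩).ne'
  rw [inner_sub_left, inner_e_left, basisAverage, inner_smul_left, sum_inner,
    sum_congr rfl fun j hj => (inner_e_left j z).trans (hconst z hz j hj)]
  simp [hs]

lemma linearIndependent_pair_of_apply {ι : Type*} {x y : EuclideanSpace ℝ ι} {j k : ι}
    (hxj : x j ≠ 0) (hyj : y j = 0) (hyk : y k ≠ 0) : LinearIndependent ℝ ![x, y] := by
  refine LinearIndependent.pair_iff.2 fun s t hst => ?_
  have hj : s * x j + t * y j = 0 := by simpa using congr_arg (· j) hst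
  have hs : s = 0 := by simpa [hyj, hxj] using hj
  have hk : s * x k + t * y k = 0 := by simpa using congr_arg (· k) hst
  exact ⟨hs, by simpa [hs, hyk] using hk⟩

lemma Set.image_sep_smul_notMem_image {R M N : Type*} [Semiring R] [AddCommMonoid M]
    [Module R M] [AddCommMonoid N] [Module R N] {f : M →ₗ[R] N} (hf : Function.Injective f)
    (T : Set M) (c : R) :
    {x ∈ f '' T | c • x ∉ f '' T} = f '' {t ∈ T | c • t ∉ T} := by
  ext x
  constructor
  · rintro ⟨⟨t, ht, rfl⟩, hct⟩
    exact ⟨t, ⟨ht, fun h => hct ⟨c • t, h, map_smul f c t⟩⟩, rfl⟩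
  · rintro ⟨t, ⟨ht, hct⟩, rfl⟩
    refine ⟨⟨t, ht, rfl⟩, ?_⟩
    rintro ⟨t', ht', h⟩
    rw [← map_smul, hf.eq_iff] at h
    exact hct (h ▸ ht')

lemma mem_Croots_iff {n : ℕ} {v : EuclideanSpace ℝ (Fin n)} :
    v ∈ Croots n ↔ ∃ (k l : Fin n) (s t : ℝ), (s = 1 ∨ s = -1) ∧ (t = 1 ∨ t = -1) ∧
      (k < l ∨ k = l ∧ s = t) ∧ v = s • e k + t • e l := by
  constructor
  · rintro (⟨k, l, hkl, rfl | rfl | rfl | rfl⟩ | ⟨k, rfl | rfl⟩)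
    · exact ⟨k, l, 1, -1, by norm_num, by norm_num, Or.inl hkl, by module⟩
    · exact ⟨k, l, 1, 1, by norm_num, by norm_num, Or.inl hkl, by module⟩
    · exact ⟨k, l, -1, 1, by norm_num, by norm_num, Or.inl hkl, by module⟩
    · exact ⟨k, l, -1, -1, by norm_num, by norm_num, Or.inl hkl, by module⟩
    · exact ⟨k, k, 1, 1, by norm_num, by norm_num, Or.inr ⟨rfl, rfl⟩, by module⟩
    · exact ⟨k, k, -1, -1, by norm_num, by norm_num, Or.inr ⟨rfl, rfl⟩, by module⟩
  · rintro ⟨k, l, s, t, hs, ht, hkl | ⟨rfl, rfl⟩, rfl⟩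
    · left
      refine ⟨k, l, hkl, ?_⟩
      rcases hs with rfl | rfl <;> rcases ht with rfl | rfl
      · exact Or.inr (Or.inl (by module))
      · exact Or.inl (by module)
      · exact Or.inr (Or.inr (Or.inl (by module)))
      · exact Or.inr (Or.inr (Or.inr (by module)))
    · right
      refine ⟨k, ?_⟩
      rcases hs with rfl | rfl
      · exact Or.inl (by module)
      · exact Or.inr (by module)

def B2Coords : Set (Fin 2 → ℝ) :=
  {![1, 0], ![-1, 0], ![0, 1], ![0, -1], ![1, 1], ![-1, -1], ![2, 1], ![-2, -1]}

lemma zero_notMem_B2Coords : (0 : Fin 2 → ℝ) ∉ B2Coords := by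
  simp [B2Coords, funext_iff, Fin.forall_fin_two]

lemma B2Coords_sep_half : {x ∈ B2Coords | (1 / 2 : ℝ) • x ∉ B2Coords} = B2Coords := by
  refine Set.sep_eq_self_iff_mem_true.2 fun x hx => ?_
  simp only [B2Coords, Set.mem_insert_iff, Set.mem_singleton_iff] at hx
  rcases hx with rfl | rfl | rfl | rfl | rfl | rfl | rfl | rfl <;>
    norm_num [B2Coords, funext_iff, Fin.forall_fin_two]

def CsimpleExcept (n : ℕ) (i : Fin n) : Set (EuclideanSpace ℝ (Fin n)) :=
  {v | ∃ k : Fin n, k ≠ i ∧ (k : ℕ) + 1 < n ∧ v = Csimple n k}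

section CsimpleExcept

variable {n : ℕ} {i : Fin n}

lemma inner_Csimple_left {k : Fin n} (hk : (k : ℕ) + 1 < n) (z : EuclideanSpace ℝ (Fin n)) :
    inner ℝ (Csimple n k) z = z k - z ⟨k + 1, hk⟩ := by
  rw [Csimple, dif_pos hk, inner_sub_left, inner_e_left, inner_e_left]

lemma mem_orthogonal_span_CsimpleExcept_iff (z : EuclideanSpace ℝ (Fin n)) :
    z ∈ (span ℝ (CsimpleExcept n i))ᗮ ↔ ∀ j k : Fin n, (j ≤ i ↔ k ≤ i) → z j = z k := by
  simp only [mem_orthogonal_span_iff, CsimpleExcept, Set.mem_ofPred_eq, forall_exists_index,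
    and_imp]
  constructor
  · intro hz j k hjk
    wlog hle : j ≤ k generalizing j k
    · exact (this k j hjk.symm (le_of_not_ge hle)).symm
    refine Fin.apply_eq_of_forall_succ _ hle fun m hjm hm hmk => ?_
    have hmi : m ≠ i := by
      rintro rfl
      have := hjk.1 hjm
      simp only [Fin.le_def] at this hmk
      omega
    exact sub_eq_zero.1 ((inner_Csimple_left hm z).symm.trans (hz _ m hmi hm rfl))
  · rintro hz _ m hmi hm rfl
    rw [inner_Csimple_left hm, sub_eq_zero]
    refine hz _ _ ?_
    simp only [Fin.le_def, ← Fin.val_ne_iff] at hmi ⊢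
    omega

lemma projC_CsimpleExcept_e_of_le {k : Fin n} (hk : k ≤ i) :
    projC (CsimpleExcept n i) (e k) = basisAverage (Iic i) := by
  refine starProjection_e_eq_basisAverage _ (mem_Iic.2 hk) (fun z hz j hj => ?_) ?_
  · exact (mem_orthogonal_span_CsimpleExcept_iff z).1 hz j k (by simp_all)
  · exact (mem_orthogonal_span_CsimpleExcept_iff _).2 fun j k hjk => by
      simp [basisAverage_apply, hjk]

lemma projC_CsimpleExcept_e_of_lt {k : Fin n} (hk : i < k) :
    projC (CsimpleExcept n i) (e k) = basisAverage (Ioi i) := by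
  refine starProjection_e_eq_basisAverage _ (mem_Ioi.2 hk) (fun z hz j hj => ?_) ?_
  · exact (mem_orthogonal_span_CsimpleExcept_iff z).1 hz j k (by simp_all [not_le.2 hk])
  · exact (mem_orthogonal_span_CsimpleExcept_iff _).2 fun j k hjk => by
      simp only [basisAverage_apply, mem_Ioi, lt_iff_not_ge, hjk]

def restrictedSimple (hi : (i : ℕ) + 1 < n) : Fin 2 → EuclideanSpace ℝ (Fin n) :=
  ![projC (CsimpleExcept n i) (Csimple n i),
    projC (CsimpleExcept n i) (Csimple n ⟨n - 1, Nat.sub_one_lt_of_lt hi⟩)]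

lemma restrictedSimple_zero (hi : (i : ℕ) + 1 < n) :
    restrictedSimple hi 0 = basisAverage (Iic i) - basisAverage (Ioi i) := by
  rw [restrictedSimple, Matrix.cons_val_zero, Csimple, dif_pos hi, projC_eq_starProjection,
    map_sub, ← projC_eq_starProjection, projC_CsimpleExcept_e_of_le le_rfl,
    projC_CsimpleExcept_e_of_lt (Fin.lt_def.2 (Nat.lt_succ_self _))]

lemma restrictedSimple_one (hi : (i : ℕ) + 1 < n) :
    restrictedSimple hi 1 = (2 : ℝ) • basisAverage (Ioi i) := by
  rw [restrictedSimple, Matrix.cons_val_one, Matrix.cons_val_zero, Csimple,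
    dif_neg (by simp only; omega), projC_eq_starProjection, map_smul, ← projC_eq_starProjection,
    projC_CsimpleExcept_e_of_lt (Fin.lt_def.2 (by simp only; omega))]

lemma linearIndependent_restrictedSimple (hi : (i : ℕ) + 1 < n) :
    LinearIndependent ℝ (restrictedSimple hi) := by
  have hpair : restrictedSimple hi = ![restrictedSimple hi 0, restrictedSimple hi 1] := by
    ext1 j; fin_cases j <;> rfl
  rw [hpair, restrictedSimple_zero, restrictedSimple_one]
  refine linearIndependent_pair_of_apply (j := i) (k := ⟨i + 1, hi⟩) ?_ ?_ ?_ <;>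
    simp [basisAverage_apply, Fin.lt_def, Nat.cast_add_one_ne_zero]
  omega

lemma linearCombination_restrictedSimple_injective (hi : (i : ℕ) + 1 < n) :
    Function.Injective (Fintype.linearCombination ℝ (restrictedSimple hi)) :=
  linearIndependent_iff_injective_fintypeLinearCombination.1
    (linearIndependent_restrictedSimple hi)

/-- `p(e_k)` in the basis `ᾱ_i, ᾱ_n`: the block averages are `ᾱ_i + ᾱ_n / 2` and `ᾱ_n / 2`. -/
def restrictedCoord (i k : Fin n) : Fin 2 → ℝ :=
  if k ≤ i then ![1, 1 / 2] else ![0, 1 / 2]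

lemma projC_CsimpleExcept_e (hi : (i : ℕ) + 1 < n) (k : Fin n) :
    projC (CsimpleExcept n i) (e k) =
      Fintype.linearCombination ℝ (restrictedSimple hi) (restrictedCoord i k) := by
  rw [Fintype.linearCombination_apply, Fin.sum_univ_two, restrictedSimple_zero,
    restrictedSimple_one, restrictedCoord]
  split_ifs with hk
  · rw [projC_CsimpleExcept_e_of_le hk]
    simp only [Matrix.cons_val_zero, Matrix.cons_val_one]
    module
  · rw [projC_CsimpleExcept_e_of_lt (not_le.1 hk)]
    simp only [Matrix.cons_val_zero, Matrix.cons_val_one]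
    module

lemma signed_add_restrictedCoord_mem {s t : ℝ} (hs : s = 1 ∨ s = -1) (ht : t = 1 ∨ t = -1)
    (k l : Fin n) : s • restrictedCoord i k + t • restrictedCoord i l ∈ insert 0 B2Coords := by
  simp only [restrictedCoord, B2Coords]
  rcases hs with rfl | rfl <;> rcases ht with rfl | rfl <;> split_ifs <;>
    norm_num [funext_iff, Fin.forall_fin_two]

lemma exists_signed_add_restrictedCoord_eq (hi : (i : ℕ) + 1 < n) {c : Fin 2 → ℝ}
    (hc : c ∈ B2Coords) : ∃ (k l : Fin n) (s t : ℝ), (s = 1 ∨ s = -1) ∧ (t = 1 ∨ t = -1) ∧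
      (k < l ∨ k = l ∧ s = t) ∧ s • restrictedCoord i k + t • restrictedCoord i l = c := by
  set i' : Fin n := ⟨i + 1, hi⟩
  have hii' : i < i' := Fin.lt_def.2 (Nat.lt_succ_self _)
  have hci : restrictedCoord i i = ![1, 1 / 2] := if_pos le_rfl
  have hci' : restrictedCoord i i' = ![0, 1 / 2] := if_neg (not_le.2 hii')
  simp only [B2Coords, Set.mem_insert_iff, Set.mem_singleton_iff] at hc
  rcases hc with rfl | rfl | rfl | rfl | rfl | rfl | rfl | rfl
  · exact ⟨i, i', 1, -1, by norm_num, by norm_num, Or.inl hii', by norm_num [hci, hci']⟩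
  · exact ⟨i, i', -1, 1, by norm_num, by norm_num, Or.inl hii', by norm_num [hci, hci']⟩
  · exact ⟨i', i', 1, 1, by norm_num, by norm_num, Or.inr ⟨rfl, rfl⟩, by norm_num [hci']⟩
  · exact ⟨i', i', -1, -1, by norm_num, by norm_num, Or.inr ⟨rfl, rfl⟩, by norm_num [hci']⟩
  · exact ⟨i, i', 1, 1, by norm_num, by norm_num, Or.inl hii', by norm_num [hci, hci']⟩
  · exact ⟨i, i', -1, -1, by norm_num, by norm_num, Or.inl hii', by norm_num [hci, hci']⟩
  · exact ⟨i, i, 1, 1, by norm_num, by norm_num, Or.inr ⟨rfl, rfl⟩, by norm_num [hci]⟩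
  · exact ⟨i, i, -1, -1, by norm_num, by norm_num, Or.inr ⟨rfl, rfl⟩, by norm_num [hci]⟩

lemma restrictedRoots_Croots_CsimpleExcept (hi : (i : ℕ) + 1 < n) :
    restrictedRoots (Croots n) (CsimpleExcept n i) =
      Fintype.linearCombination ℝ (restrictedSimple hi) '' B2Coords := by
  set L := Fintype.linearCombination ℝ (restrictedSimple hi)
  have hproj : ∀ (k l : Fin n) (s t : ℝ), projC (CsimpleExcept n i) (s • e k + t • e l) =
      L (s • restrictedCoord i k + t • restrictedCoord i l) := by
    intro k l s t
    rw [projC_eq_starProjection, map_add, map_smul, map_smul, ← projC_eq_starProjection,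
      projC_CsimpleExcept_e hi, projC_CsimpleExcept_e hi, map_add, map_smul, map_smul]
  ext x
  constructor
  · rintro ⟨⟨v, hv, rfl⟩, hx0⟩
    obtain ⟨k, l, s, t, hs, ht, -, rfl⟩ := mem_Croots_iff.1 hv
    rw [hproj] at hx0 ⊢
    rcases signed_add_restrictedCoord_mem hs ht k l with h0 | hB
    · exact absurd (by rw [h0, map_zero]; rfl) hx0
    · exact ⟨_, hB, rfl⟩
  · rintro ⟨c, hc, rfl⟩
    have hL := linearCombination_restrictedSimple_injective hi
    refine ⟨?_, fun h => zero_notMem_B2Coords (hL (h.trans (map_zero L).symm) ▸ hc)⟩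
    obtain ⟨k, l, s, t, hs, ht, hkl, rfl⟩ := exists_signed_add_restrictedCoord_eq hi hc
    exact ⟨_, mem_Croots_iff.2 ⟨k, l, s, t, hs, ht, hkl, rfl⟩, hproj k l s t⟩

end CsimpleExcept

/-- In type `C_n` (`n ≥ 2`), removing the simple roots `α_i`
(`1 ≤ i < n`) and `α_n`, the projections `ᾱ_i, ᾱ_n` onto the orthogonal complement of
the span of the remaining simple roots are linearly independent, and the set of reduced
restricted roots is `{±ᾱ_i, ±ᾱ_n, ±(ᾱ_i + ᾱ_n), ±(2ᾱ_i + ᾱ_n)}` (type `B_2`). -/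
theorem statement9 (n : ℕ) (i : Fin n) (hi : (i : ℕ) + 1 < n)
    (S : Set (EuclideanSpace ℝ (Fin n)))
    (hS : S = {v | ∃ k : Fin n, k ≠ i ∧ (k : ℕ) + 1 < n ∧ v = Csimple n k}) :
    LinearIndependent ℝ
      ![projC S (Csimple n i), projC S (Csimple n ⟨n - 1, by omega⟩)] ∧
    reducedRestrictedRoots (Croots n) S =
      {projC S (Csimple n i), -projC S (Csimple n i),
       projC S (Csimple n ⟨n - 1, by omega⟩), -projC S (Csimple n ⟨n - 1, by omega⟩),
       projC S (Csimple n i) + projC S (Csimple n ⟨n - 1, by omega⟩),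
       -(projC S (Csimple n i) + projC S (Csimple n ⟨n - 1, by omega⟩)),
       (2 : ℝ) • projC S (Csimple n i) + projC S (Csimple n ⟨n - 1, by omega⟩),
       -((2 : ℝ) • projC S (Csimple n i) + projC S (Csimple n ⟨n - 1, by omega⟩))} := by
  obtain rfl : S = CsimpleExcept n i := hS
  refine ⟨linearIndependent_restrictedSimple hi, ?_⟩
  rw [reducedRestrictedRoots, restrictedRoots_Croots_CsimpleExcept hi,
    Set.image_sep_smul_notMem_image (linearCombination_restrictedSimple_injective hi),
    B2Coords_sep_half]
  simp [B2Coords, Set.image_insert_eq, Fintype.linearCombination_apply, Fin.sum_univ_two,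
    restrictedSimple, -neg_add_rev, neg_add]
end
end

section
/- Let Σ ⊂ ℝ^4 be the root system of type F_4, i.e. Σ = {±e_i ± e_j : 1 ≤ i < j ≤ 4} ∪ {±e_i : 1 ≤ i ≤ 4} ∪ {(±e_1 ± e_2 ± e_3 ± e_4)/2}, with simple roots α_1 = e_2 − e_3, α_2 = e_3 − e_4, α_3 = e_4, α_4 = (e_1 − e_2 − e_3 − e_4)/2. Let S = {α_3, α_4} and let p be the orthogonal projection of ℝ^4 onto the orthogonal complement of the span of S. Write ᾱ_1 = p(α_1) and ᾱ_2 = p(α_2). Then ᾱ_1 and ᾱ_2 are linearly independent and the set of reduced restricted roots Σ_red(S) equals {±ᾱ_1, ±ᾱ_2, ±(ᾱ_1 + ᾱ_2), ±(ᾱ_1 + 2ᾱ_2), ±(ᾱ_1 + 3ᾱ_2), ±(2ᾱ_1 + 3ᾱ_2)}. -/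
/-!
Write a root as `β = n₁α₁ + n₂α₂ + n₃α₃ + n₄α₄` in the basis of simple roots. The projection
kills `α₃` and `α₄`, so `p(β) = n₁ᾱ₁ + n₂ᾱ₂`, and `ᾱ₁, ᾱ₂` are independent because no nonzero
combination of `α₁, α₂` lies in `span {α₃, α₄}`. Hence `Σ(S)` is the image of the nonzero pairs
`(n₁, n₂)` occurring among the 48 roots of `F₄`, and a direct check gives exactly the twelve pairs
`±(1,0), ±(0,1), ±(1,1), ±(1,2), ±(1,3), ±(2,3)`. None of them is twice another, so every
restricted root is reduced.
-/

noncomputable section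

/-- The root system of type `F_4` in `ℝ^4`: `±e_i ± e_j` (`i < j`), `±e_i`, and
`(±e_1 ± e_2 ± e_3 ± e_4)/2`. -/
def F4roots : Set (EuclideanSpace ℝ (Fin 4)) :=
  {v | ∃ k l : Fin 4, k < l ∧
    (v = e k - e l ∨ v = e k + e l ∨ v = -e k + e l ∨ v = -e k - e l)} ∪
  {v | ∃ k : Fin 4, v = e k ∨ v = -e k} ∪
  {v | ∃ ε : Fin 4 → ℝ, (∀ i, ε i = 1 ∨ ε i = -1) ∧ v = (1 / 2 : ℝ) • ∑ i, ε i • e i}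

/-- `α_1 = e_2 − e_3`. -/
def α1 : EuclideanSpace ℝ (Fin 4) := e 1 - e 2
/-- `α_2 = e_3 − e_4`. -/
def α2 : EuclideanSpace ℝ (Fin 4) := e 2 - e 3
/-- `α_3 = e_4`. -/
def α3 : EuclideanSpace ℝ (Fin 4) := e 3
/-- `α_4 = (e_1 − e_2 − e_3 − e_4)/2`. -/
def α4 : EuclideanSpace ℝ (Fin 4) := (1 / 2 : ℝ) • (e 0 - e 1 - e 2 - e 3)

open Submodule Function

section Projection

variable {N : ℕ} {S : Set (EuclideanSpace ℝ (Fin N))}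

lemma projC_apply (v : EuclideanSpace ℝ (Fin N)) :
    projC S v = (span ℝ S)ᗮ.starProjection v := rfl

lemma projC_eq_zero_iff {v : EuclideanSpace ℝ (Fin N)} : projC S v = 0 ↔ v ∈ span ℝ S := by
  rw [projC_apply, starProjection_apply_eq_zero_iff, orthogonal_orthogonal]

lemma projC_add_of_mem_span (v : EuclideanSpace ℝ (Fin N)) {w : EuclideanSpace ℝ (Fin N)}
    (hw : w ∈ span ℝ S) : projC S (v + w) = projC S v := by
  rw [projC_apply, map_add, ← projC_apply, ← projC_apply, projC_eq_zero_iff.2 hw, add_zero]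

lemma reducedRestrictedRoots_eq_image {V : Type*} [AddCommGroup V] [Module ℝ V]
    {Rts : Set (EuclideanSpace ℝ (Fin N))} {f : V →ₗ[ℝ] EuclideanSpace ℝ (Fin N)}
    (hf : Injective f) {A : Set V} (h : restrictedRoots Rts S = f '' A) :
    reducedRestrictedRoots Rts S = f '' {a ∈ A | (1 / 2 : ℝ) • a ∉ A} := by
  ext x
  simp only [reducedRestrictedRoots, h, Set.mem_image, Set.mem_ofPred_eq]
  constructor
  · rintro ⟨⟨a, ha, rfl⟩, hhalf⟩
    exact ⟨a, ⟨ha, fun h' => hhalf ⟨_, h', map_smul f _ a⟩⟩, rfl⟩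
  · rintro ⟨a, ⟨ha, hhalf⟩, rfl⟩
    refine ⟨⟨a, ha, rfl⟩, ?_⟩
    rintro ⟨b, hb, hfb⟩
    rw [← map_smul] at hfb
    exact hhalf (hf hfb ▸ hb)

end Projection

local notation "ℝ⁴" => EuclideanSpace ℝ (Fin 4)
local notation "S₀" => (insert α3 (singleton α4) : Set ℝ⁴)

-- `(n₁, n₂)` where `v = n₁ α1 + n₂ α2 + n₃ α3 + n₄ α4`.
def simpleCoeffs : ℝ⁴ →ₗ[ℝ] ℝ × ℝ where
  toFun v := (v 0 + v 1, 2 * v 0 + v 1 + v 2)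
  map_add' v w := by simp only [PiLp.add_apply, Prod.mk_add_mk]; ring_nf
  map_smul' c v := by
    simp only [PiLp.smul_apply, smul_eq_mul, RingHom.id_apply, Prod.smul_mk]; ring_nf

lemma simpleCoeffs_apply (v : ℝ⁴) : simpleCoeffs v = (v 0 + v 1, 2 * v 0 + v 1 + v 2) := rfl

@[simp] lemma simpleCoeffs_e0 : simpleCoeffs (e 0) = (1, 2) := by simp [simpleCoeffs_apply, e]
@[simp] lemma simpleCoeffs_e1 : simpleCoeffs (e 1) = (1, 1) := by simp [simpleCoeffs_apply, e]
@[simp] lemma simpleCoeffs_e2 : simpleCoeffs (e 2) = (0, 1) := by simp [simpleCoeffs_apply, e]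
@[simp] lemma simpleCoeffs_e3 : simpleCoeffs (e 3) = 0 := by simp [simpleCoeffs_apply, e]

@[simp] lemma simpleCoeffs_α1 : simpleCoeffs α1 = (1, 0) := by norm_num [α1]
@[simp] lemma simpleCoeffs_α2 : simpleCoeffs α2 = (0, 1) := by norm_num [α2]
@[simp] lemma simpleCoeffs_α3 : simpleCoeffs α3 = 0 := by simp [α3]
@[simp] lemma simpleCoeffs_α4 : simpleCoeffs α4 = 0 := by norm_num [α4]

lemma simpleCoeffs_decomposition (v : ℝ⁴) :
    v = (simpleCoeffs v).1 • α1 + (simpleCoeffs v).2 • α2 +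
      ((3 * v 0 + v 1 + v 2 + v 3) • α3 + (2 * v 0) • α4) := by
  ext i
  fin_cases i <;>
    simp only [simpleCoeffs_apply, α1, α2, α3, α4, e, PiLp.add_apply, PiLp.sub_apply,
      PiLp.smul_apply, PiLp.single_apply, smul_eq_mul, Fin.reduceFinMk, Fin.isValue, Fin.reduceEq,
      ↓reduceIte] <;> ring

def barCombination : ℝ × ℝ →ₗ[ℝ] ℝ⁴ :=
  (LinearMap.toSpanSingleton ℝ _ (projC S₀ α1)).coprod
    (LinearMap.toSpanSingleton ℝ _ (projC S₀ α2))

lemma barCombination_apply (c : ℝ × ℝ) :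
    barCombination c = c.1 • projC S₀ α1 + c.2 • projC S₀ α2 := rfl

lemma projC_eq_barCombination_simpleCoeffs (v : ℝ⁴) :
    projC S₀ v = barCombination (simpleCoeffs v) := by
  conv_lhs => rw [simpleCoeffs_decomposition v]
  rw [projC_add_of_mem_span _ (add_mem (smul_mem _ _ (subset_span (by simp)))
    (smul_mem _ _ (subset_span (by simp)))), projC_apply, map_add, map_smul, map_smul]
  rfl

lemma linearIndependent_projC_α1_α2 : LinearIndependent ℝ ![projC S₀ α1, projC S₀ α2] := by
  rw [LinearIndependent.pair_iff]
  intro s t hst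
  rw [projC_apply, projC_apply, ← map_smul, ← map_smul, ← map_add, ← projC_apply,
    projC_eq_zero_iff, mem_span_pair] at hst
  obtain ⟨a, b, hab⟩ := hst
  simpa using (congrArg simpleCoeffs hab).symm

def g2Coeffs : Set (ℝ × ℝ) :=
  {(1, 0), (-1, 0), (0, 1), (0, -1), (1, 1), (-1, -1),
   (1, 2), (-1, -2), (1, 3), (-1, -3), (2, 3), (-2, -3)}

lemma simpleCoeffs_mem_of_mem_F4roots {β : ℝ⁴} (hβ : β ∈ F4roots) :
    simpleCoeffs β ∈ insert 0 g2Coeffs := by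
  simp only [F4roots, Set.mem_union, Set.mem_ofPred_eq] at hβ
  rcases hβ with (⟨k, l, hkl, hβ⟩ | ⟨k, hβ⟩) | ⟨ε, hε, rfl⟩
  · fin_cases k <;> fin_cases l <;> simp at hkl <;> rcases hβ with rfl | rfl | rfl | rfl <;>
      simp [g2Coeffs] <;> norm_num
  · fin_cases k <;> rcases hβ with rfl | rfl <;> simp [g2Coeffs]
  · rcases hε 0 with h0 | h0 <;> rcases hε 1 with h1 | h1 <;> rcases hε 2 with h2 | h2 <;>
      norm_num [g2Coeffs, Fin.sum_univ_four, h0, h1, h2]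

lemma exists_mem_F4roots_simpleCoeffs_eq {c : ℝ × ℝ} (hc : c ∈ g2Coeffs) :
    ∃ β ∈ F4roots, simpleCoeffs β = c := by
  have short (k : Fin 4) : e k ∈ F4roots ∧ -e k ∈ F4roots :=
    ⟨Or.inl (Or.inr ⟨k, Or.inl rfl⟩), Or.inl (Or.inr ⟨k, Or.inr rfl⟩)⟩
  have long {k l : Fin 4} (hkl : k < l) :
      e k - e l ∈ F4roots ∧ e k + e l ∈ F4roots ∧ -e k + e l ∈ F4roots ∧ -e k - e l ∈ F4roots :=
    ⟨Or.inl (Or.inl ⟨k, l, hkl, Or.inl rfl⟩), Or.inl (Or.inl ⟨k, l, hkl, Or.inr (Or.inl rfl)⟩),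
      Or.inl (Or.inl ⟨k, l, hkl, Or.inr (Or.inr (Or.inl rfl))⟩),
      Or.inl (Or.inl ⟨k, l, hkl, Or.inr (Or.inr (Or.inr rfl))⟩)⟩
  simp only [g2Coeffs, Set.mem_insert_iff, Set.mem_singleton_iff] at hc
  rcases hc with rfl | rfl | rfl | rfl | rfl | rfl | rfl | rfl | rfl | rfl | rfl | rfl
  · exact ⟨e 1 - e 2, (long (k := 1) (l := 2) (by decide)).1, by simp⟩
  · exact ⟨-e 1 + e 2, (long (k := 1) (l := 2) (by decide)).2.2.1, by simp⟩
  · exact ⟨e 2, (short 2).1, by simp⟩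
  · exact ⟨-e 2, (short 2).2, by simp⟩
  · exact ⟨e 1, (short 1).1, by simp⟩
  · exact ⟨-e 1, (short 1).2, by simp⟩
  · exact ⟨e 1 + e 2, (long (k := 1) (l := 2) (by decide)).2.1, by norm_num⟩
  · exact ⟨-e 1 - e 2, (long (k := 1) (l := 2) (by decide)).2.2.2, by norm_num⟩
  · exact ⟨e 0 + e 2, (long (k := 0) (l := 2) (by decide)).2.1, by norm_num⟩
  · exact ⟨-e 0 - e 2, (long (k := 0) (l := 2) (by decide)).2.2.2, by norm_num⟩
  · exact ⟨e 0 + e 1, (long (k := 0) (l := 1) (by decide)).2.1, by norm_num⟩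
  · exact ⟨-e 0 - e 1, (long (k := 0) (l := 1) (by decide)).2.2.2, by norm_num⟩

lemma half_smul_notMem_g2Coeffs {c : ℝ × ℝ} (hc : c ∈ g2Coeffs) :
    (1 / 2 : ℝ) • c ∉ g2Coeffs := by
  simp only [g2Coeffs, Set.mem_insert_iff, Set.mem_singleton_iff] at hc ⊢
  rcases hc with rfl | rfl | rfl | rfl | rfl | rfl | rfl | rfl | rfl | rfl | rfl | rfl <;> norm_num

lemma barCombination_injective : Injective barCombination := by
  rw [← LinearMap.ker_eq_bot, LinearMap.ker_eq_bot']
  rintro ⟨s, t⟩ h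
  obtain ⟨rfl, rfl⟩ := LinearIndependent.pair_iff.1 linearIndependent_projC_α1_α2 s t h
  rfl

lemma restrictedRoots_F4roots : restrictedRoots F4roots S₀ = barCombination '' g2Coeffs := by
  ext x
  constructor
  · rintro ⟨⟨β, hβ, rfl⟩, hx⟩
    rw [projC_eq_barCombination_simpleCoeffs] at hx ⊢
    rcases simpleCoeffs_mem_of_mem_F4roots hβ with h0 | hc
    · exact absurd (by rw [h0, map_zero]; rfl) hx
    · exact ⟨_, hc, rfl⟩
  · rintro ⟨c, hc, rfl⟩
    have hc0 : c ≠ 0 := by rintro rfl; simp [g2Coeffs, Prod.ext_iff] at hc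
    obtain ⟨β, hβ, rfl⟩ := exists_mem_F4roots_simpleCoeffs_eq hc
    exact ⟨⟨β, hβ, projC_eq_barCombination_simpleCoeffs β⟩,
      (barCombination_injective.ne_iff' (map_zero _)).2 hc0⟩

/-- In type `F_4`, with `S = {α_3, α_4}`, the projections `ᾱ_1, ᾱ_2`
onto the orthogonal complement of the span of `S` are linearly independent and the set
of reduced restricted roots is
`{±ᾱ_1, ±ᾱ_2, ±(ᾱ_1 + ᾱ_2), ±(ᾱ_1 + 2ᾱ_2), ±(ᾱ_1 + 3ᾱ_2), ±(2ᾱ_1 + 3ᾱ_2)}`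
(a root system of type `G_2`). -/
theorem statement12 (S : Set (EuclideanSpace ℝ (Fin 4)))
    (hS : S = {α3, α4}) :
    LinearIndependent ℝ ![projC S α1, projC S α2] ∧
    reducedRestrictedRoots F4roots S =
      {projC S α1, -projC S α1, projC S α2, -projC S α2,
       projC S α1 + projC S α2, -(projC S α1 + projC S α2),
       projC S α1 + (2 : ℝ) • projC S α2, -(projC S α1 + (2 : ℝ) • projC S α2),
       projC S α1 + (3 : ℝ) • projC S α2, -(projC S α1 + (3 : ℝ) • projC S α2),
       (2 : ℝ) • projC S α1 + (3 : ℝ) • projC S α2,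
       -((2 : ℝ) • projC S α1 + (3 : ℝ) • projC S α2)} := by
  subst hS
  refine ⟨linearIndependent_projC_α1_α2, ?_⟩
  have hreduced : {c ∈ g2Coeffs | (1 / 2 : ℝ) • c ∉ g2Coeffs} = g2Coeffs :=
    Set.sep_eq_self_iff_mem_true.2 fun _ => half_smul_notMem_g2Coeffs
  rw [reducedRestrictedRoots_eq_image barCombination_injective restrictedRoots_F4roots, hreduced]
  simp [g2Coeffs, Set.image_insert_eq, barCombination_apply, add_comm]
end
end
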